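/- arXiv:1812.05553 — 3 statements merged into one kernel-verified Lean document; each statement's English description precedes it below -/
import Mathlib

section
/- Let K be a symmetric positive semidefinite kernel on [0,1], f bounded measurable, θ ∈ ℝ, and Ψ(ξ) = ∫∫ K dξ dξ + (∫ f dξ − θ)². Suppose a finite signed measure ξ* satisfies: (i) ∫₀¹ K(s,t) ξ*(ds) = (θ/(1+c)) f(t) for all t ∈ [0,1], and (ii) ∫₀¹ f dξ* = θ c/(1+c), for some constant c ≥ 0. Then ξ* minimizes Ψ over all finite signed measures, and Ψ(ξ*) = θ²/(1+c). -/
open MeasureTheory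

/-- Integral of a function against a finite signed measure, via the Jordan
decomposition. -/
noncomputable def sint {α : Type*} [MeasurableSpace α]
    (ξ : MeasureTheory.SignedMeasure α) (g : α → ℝ) : ℝ :=
  (∫ x, g x ∂ξ.toJordanDecomposition.posPart)
    - ∫ x, g x ∂ξ.toJordanDecomposition.negPart

variable {α : Type*} [MeasurableSpace α]

lemma bdd_integrable (μ : Measure α) [IsFiniteMeasure μ] {g : α → ℝ} {C : ℝ}
    (hg : Measurable g) (hb : ∀ x, |g x| ≤ C) : Integrable g μ :=
  (integrable_const C).mono' hg.aestronglyMeasurable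
    (Filter.Eventually.of_forall fun x => by simpa [Real.norm_eq_abs] using hb x)

lemma sint_smul_fun (ξ : SignedMeasure α) (g : α → ℝ) (a : ℝ) :
    sint ξ (fun x => a * g x) = a * sint ξ g := by
  unfold sint; rw [integral_const_mul, integral_const_mul]; ring

lemma sint_sub_fun (ξ : SignedMeasure α) {g h : α → ℝ} {C D : ℝ}
    (hg : Measurable g) (hgb : ∀ x, |g x| ≤ C)
    (hh : Measurable h) (hhb : ∀ x, |h x| ≤ D) :
    sint ξ (fun x => g x - h x) = sint ξ g - sint ξ h := by
  unfold sint
  rw [integral_sub (bdd_integrable _ hg hgb) (bdd_integrable _ hh hhb),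
    integral_sub (bdd_integrable _ hg hgb) (bdd_integrable _ hh hhb)]
  ring

lemma jd_add_measures (ξ η : SignedMeasure α) :
    (ξ + η).toJordanDecomposition.posPart
        + (ξ.toJordanDecomposition.negPart + η.toJordanDecomposition.negPart)
      = (ξ + η).toJordanDecomposition.negPart
        + (ξ.toJordanDecomposition.posPart + η.toJordanDecomposition.posPart) := by
  ext s hs
  have happ : ∀ ζ : SignedMeasure α,
      ζ s = (ζ.toJordanDecomposition.posPart s).toReal
        - (ζ.toJordanDecomposition.negPart s).toReal := by
    intro ζ
    conv_lhs => rw [← ζ.toSignedMeasure_toJordanDecomposition]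
    rw [JordanDecomposition.toSignedMeasure, Measure.toSignedMeasure_sub_apply hs]
    rfl
  have hsum : (ξ + η) s = ξ s + η s := VectorMeasure.add_apply _ _ _
  rw [happ (ξ + η), happ ξ, happ η] at hsum
  simp only [Measure.add_apply]
  have h1 := measure_ne_top (ξ + η).toJordanDecomposition.posPart s
  have h2 := measure_ne_top (ξ + η).toJordanDecomposition.negPart s
  have h3 := measure_ne_top ξ.toJordanDecomposition.posPart s
  have h4 := measure_ne_top ξ.toJordanDecomposition.negPart s
  have h5 := measure_ne_top η.toJordanDecomposition.posPart s
  have h6 := measure_ne_top η.toJordanDecomposition.negPart s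
  rw [← ENNReal.toReal_eq_toReal_iff' (by finiteness) (by finiteness)]
  rw [ENNReal.toReal_add h1 (by finiteness), ENNReal.toReal_add h2 (by finiteness),
    ENNReal.toReal_add h4 h6, ENNReal.toReal_add h3 h5]
  linarith

lemma sint_add (ξ η : SignedMeasure α) {g : α → ℝ} {C : ℝ}
    (hg : Measurable g) (hb : ∀ x, |g x| ≤ C) :
    sint (ξ + η) g = sint ξ g + sint η g := by
  have key := congrArg (fun μ : Measure α => ∫ x, g x ∂μ) (jd_add_measures ξ η)
  simp only [integral_add_measure (bdd_integrable _ hg hb) (bdd_integrable _ hg hb)] at key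
  unfold sint
  linarith [key]

lemma sint_neg (ξ : SignedMeasure α) (g : α → ℝ) : sint (-ξ) g = - sint ξ g := by
  unfold sint
  rw [SignedMeasure.toJordanDecomposition_neg, JordanDecomposition.neg_posPart,
    JordanDecomposition.neg_negPart]
  ring

lemma sint_sub (ξ η : SignedMeasure α) {g : α → ℝ} {C : ℝ}
    (hg : Measurable g) (hb : ∀ x, |g x| ≤ C) :
    sint (ξ - η) g = sint ξ g - sint η g := by
  rw [sub_eq_add_neg, sint_add _ _ hg hb, sint_neg]; ring

lemma sint_bound (ξ : SignedMeasure α) {g : α → ℝ} {C : ℝ}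
    (hb : ∀ x, |g x| ≤ C) :
    |sint ξ g| ≤ C * ((ξ.toJordanDecomposition.posPart Set.univ).toReal
      + (ξ.toJordanDecomposition.negPart Set.univ).toReal) := by
  unfold sint
  have b1 := norm_integral_le_of_norm_le_const (μ := ξ.toJordanDecomposition.posPart)
    (C := C) (f := g) (Filter.Eventually.of_forall fun x => by simpa [Real.norm_eq_abs] using hb x)
  have b2 := norm_integral_le_of_norm_le_const (μ := ξ.toJordanDecomposition.negPart)
    (C := C) (f := g) (Filter.Eventually.of_forall fun x => by simpa [Real.norm_eq_abs] using hb x)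
  rw [Real.norm_eq_abs] at b1 b2
  calc |(∫ x, g x ∂ξ.toJordanDecomposition.posPart) - ∫ x, g x ∂ξ.toJordanDecomposition.negPart|
      ≤ |∫ x, g x ∂ξ.toJordanDecomposition.posPart| + |∫ x, g x ∂ξ.toJordanDecomposition.negPart| :=
        abs_sub _ _
    _ ≤ _ := by rw [mul_add]; exact add_le_add b1 b2

lemma sint_param_meas (ξ : SignedMeasure α) {K : α → α → ℝ}
    (hK : Measurable (Function.uncurry K)) :
    Measurable fun s => sint ξ (fun t => K s t) := by
  unfold sint
  exact (hK.stronglyMeasurable.integral_prod_right'.measurable).sub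
    (hK.stronglyMeasurable.integral_prod_right'.measurable)

lemma double_swap (μ ν : Measure α) [IsFiniteMeasure μ] [IsFiniteMeasure ν]
    {K : α → α → ℝ} {C : ℝ} (hK : Measurable (Function.uncurry K))
    (hb : ∀ s t, |K s t| ≤ C) :
    ∫ s, ∫ t, K s t ∂ν ∂μ = ∫ t, ∫ s, K s t ∂μ ∂ν :=
  integral_integral_swap (bdd_integrable _ hK fun p => hb p.1 p.2)

lemma param_integrable (μ ν : Measure α) [IsFiniteMeasure μ] [IsFiniteMeasure ν]
    {K : α → α → ℝ} {C : ℝ} (hK : Measurable (Function.uncurry K))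
    (hb : ∀ s t, |K s t| ≤ C) :
    Integrable (fun s => ∫ t, K s t ∂ν) μ := by
  refine bdd_integrable (C := C * (ν Set.univ).toReal) μ
    hK.stronglyMeasurable.integral_prod_right'.measurable (fun s => ?_)
  have := norm_integral_le_of_norm_le_const (μ := ν) (C := C) (f := fun t => K s t)
    (Filter.Eventually.of_forall fun t => by simpa [Real.norm_eq_abs] using hb s t)
  rw [Real.norm_eq_abs] at this; exact this

lemma sint_swap (ξ η : SignedMeasure α) {K : α → α → ℝ} {C : ℝ}
    (hK : Measurable (Function.uncurry K)) (hb : ∀ s t, |K s t| ≤ C) :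
    sint ξ (fun s => sint η (fun t => K s t))
      = sint η (fun t => sint ξ (fun s => K s t)) := by
  have hK' : Measurable (Function.uncurry fun t s => K s t) := hK.comp measurable_swap
  have hb' : ∀ t s, |K s t| ≤ C := fun t s => hb s t
  unfold sint
  rw [integral_sub (param_integrable _ _ hK hb) (param_integrable _ _ hK hb),
      integral_sub (param_integrable _ _ hK hb) (param_integrable _ _ hK hb),
      integral_sub (param_integrable _ _ hK' hb') (param_integrable _ _ hK' hb'),
      integral_sub (param_integrable _ _ hK' hb') (param_integrable _ _ hK' hb'),
      double_swap ξ.toJordanDecomposition.posPart η.toJordanDecomposition.posPart hK hb,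
      double_swap ξ.toJordanDecomposition.posPart η.toJordanDecomposition.negPart hK hb,
      double_swap ξ.toJordanDecomposition.negPart η.toJordanDecomposition.posPart hK hb,
      double_swap ξ.toJordanDecomposition.negPart η.toJordanDecomposition.negPart hK hb]
  ring


/-- If a signed measure `ξ*` satisfies the reproducing identity
`∫ K(s,·) ξ*(ds) = (θ/(1+c)) f` and `∫ f dξ* = θc/(1+c)`, then `ξ*` minimizes
`Ψ(ξ) = ∫∫ K dξ dξ + (∫ f dξ - θ)²` and `Ψ(ξ*) = θ²/(1+c)`. -/
theorem oracle_measure_minimizes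
    (K : Set.Icc (0:ℝ) 1 → Set.Icc (0:ℝ) 1 → ℝ)
    (hKsymm : ∀ s t, K s t = K t s)
    (hKmeas : Measurable (Function.uncurry K))
    (CK : ℝ) (hKb : ∀ s t, |K s t| ≤ CK)
    (hKpsd : ∀ μ : MeasureTheory.SignedMeasure (Set.Icc (0:ℝ) 1),
      0 ≤ sint μ (fun s => sint μ (fun t => K s t)))
    (f : Set.Icc (0:ℝ) 1 → ℝ) (hfm : Measurable f) (Cf : ℝ) (hfb : ∀ t, |f t| ≤ Cf)
    (θ c : ℝ) (hc : 0 ≤ c)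
    (Ψ : MeasureTheory.SignedMeasure (Set.Icc (0:ℝ) 1) → ℝ)
    (hΨ : ∀ ξ, Ψ ξ = sint ξ (fun s => sint ξ (fun t => K s t))
        + (sint ξ f - θ) ^ 2)
    (ξstar : MeasureTheory.SignedMeasure (Set.Icc (0:ℝ) 1))
    (hrepr : ∀ t, sint ξstar (fun s => K s t) = θ / (1 + c) * f t)
    (hbias : sint ξstar f = θ * c / (1 + c)) :
    (∀ ξ : MeasureTheory.SignedMeasure (Set.Icc (0:ℝ) 1), Ψ ξstar ≤ Ψ ξ) ∧
      Ψ ξstar = θ ^ 2 / (1 + c) := by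
  have h1c : (0:ℝ) < 1 + c := by linarith
  set a : ℝ := θ / (1 + c) with ha
  have hθ : θ = a * (1 + c) := by rw [ha, div_mul_cancel₀ _ h1c.ne']
  have hbias' : sint ξstar f = a * c := by rw [hbias, ha]; ring
  -- section measurability
  have hKs : ∀ s, Measurable fun t => K s t :=
    fun s => hKmeas.comp (measurable_const.prodMk measurable_id)
  -- inner integral against ξstar
  have inner_star : ∀ s, sint ξstar (fun t => K s t) = a * f s := by
    intro s
    rw [show (fun t => K s t) = fun t => K t s from funext fun t => hKsymm s t]
    exact hrepr s
  -- the G functions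
  set mass : SignedMeasure (Set.Icc (0:ℝ) 1) → ℝ := fun ξ =>
    (ξ.toJordanDecomposition.posPart Set.univ).toReal
      + (ξ.toJordanDecomposition.negPart Set.univ).toReal with hmass
  have hGm : ∀ ξ : SignedMeasure (Set.Icc (0:ℝ) 1), Measurable fun s => sint ξ (fun t => K s t) :=
    fun ξ => sint_param_meas ξ hKmeas
  have hGb : ∀ (ξ : SignedMeasure (Set.Icc (0:ℝ) 1)) s, |sint ξ (fun t => K s t)| ≤ CK * mass ξ :=
    fun ξ s => sint_bound ξ (hKb s)
  -- I ξstar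
  have hIstar : sint ξstar (fun s => sint ξstar (fun t => K s t)) = a * (a * c) := by
    rw [show (fun s => sint ξstar (fun t => K s t)) = fun s => a * f s from funext inner_star,
      sint_smul_fun, hbias']
  -- cross term 1
  have hB1 : ∀ ξ : SignedMeasure (Set.Icc (0:ℝ) 1),
      sint ξ (fun s => sint ξstar (fun t => K s t)) = a * sint ξ f := by
    intro ξ
    rw [show (fun s => sint ξstar (fun t => K s t)) = fun s => a * f s from funext inner_star,
      sint_smul_fun]
  -- cross term 2 (Fubini)
  have hB2 : ∀ ξ : SignedMeasure (Set.Icc (0:ℝ) 1),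
      sint ξstar (fun s => sint ξ (fun t => K s t)) = a * sint ξ f := by
    intro ξ
    rw [sint_swap ξstar ξ hKmeas hKb,
      show (fun t => sint ξstar fun s => K s t) = fun t => a * f t from funext hrepr,
      sint_smul_fun]
  -- quadratic expansion of I (ξ - ξstar)
  have hexp : ∀ ξ : SignedMeasure (Set.Icc (0:ℝ) 1),
      sint (ξ - ξstar) (fun s => sint (ξ - ξstar) (fun t => K s t))
        = sint ξ (fun s => sint ξ (fun t => K s t)) - 2 * (a * sint ξ f) + a * (a * c) := by
    intro ξ
    have hptw : (fun s => sint (ξ - ξstar) (fun t => K s t))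
        = fun s => sint ξ (fun t => K s t) - sint ξstar (fun t => K s t) :=
      funext fun s => sint_sub ξ ξstar (hKs s) (hKb s)
    rw [hptw]
    have hdm : Measurable fun s => sint ξ (fun t => K s t) - sint ξstar (fun t => K s t) :=
      (hGm ξ).sub (hGm ξstar)
    have hdb : ∀ s, |sint ξ (fun t => K s t) - sint ξstar (fun t => K s t)|
        ≤ CK * mass ξ + CK * mass ξstar :=
      fun s => (abs_sub _ _).trans (add_le_add (hGb ξ s) (hGb ξstar s))
    rw [sint_sub ξ ξstar hdm hdb,
      sint_sub_fun ξ (hGm ξ) (hGb ξ) (hGm ξstar) (hGb ξstar),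
      sint_sub_fun ξstar (hGm ξ) (hGb ξ) (hGm ξstar) (hGb ξstar),
      hB1 ξ, hB2 ξ, hIstar]
    ring
  have hΨstar : Ψ ξstar = a * (a * c) + (a * c - θ) ^ 2 := by
    rw [hΨ ξstar, hIstar, hbias']
  constructor
  · intro ξ
    have hpsd := hKpsd (ξ - ξstar)
    rw [hexp ξ] at hpsd
    rw [hΨstar, hΨ ξ, hθ]
    nlinarith [hpsd, sq_nonneg (sint ξ f - a * c)]
  · rw [hΨstar, hθ]
    field_simp
    ring
end

section
/- Let u, v : [0,1] → ℝ be twice differentiable with v nowhere zero, u(0) ≠ 0, and q = u/v strictly increasing with q' > 0 on [0,1]; let f : [0,1] → ℝ be twice differentiable. Define c = ∫₀¹ ((d/dt)[f(t)/v(t)])² (q'(t))⁻¹ dt + f(0)²/(u(0)v(0)). Let ξ* be the signed measure with point masses P₀ at 0 and P₁ at 1 and Lebesgue density p as in the paper, scaled by 1/(1+c), where P₀ = −(1/v(0)) (d/dt)[f/u]|₀ (q'(0))⁻¹ q(0), P₁ = (1/u(1)) (d/dt)[f/v]|₁ (q'(1))⁻¹ q(1), and p(t) = −(1/v(t)) (d/dt){(d/dt)[f/v](t)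 (q'(t))⁻¹}. Then ∫₀¹ f(s) ξ*(ds) = c/(1+c) (for the measure with the θ_j factor removed, i.e. with total prefactor 1/(1+c)). -/
open MeasureTheory intervalIntegral Set

/-- Integration-by-parts identity for the optimal oracle measure (case (A),
`u(0) ≠ 0`): for the signed measure
`ξ*(dt) = (1/(1+c))(P₀δ₀ + P₁δ₁ + p(t)dt)` one has `∫ f dξ* = c/(1+c)`. -/
theorem oracle_measure_bias_identity
    (u v f u' v' f' : ℝ → ℝ)
    (hu : ∀ t, HasDerivAt u (u' t) t)
    (hv : ∀ t, HasDerivAt v (v' t) t)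
    (hf : ∀ t, HasDerivAt f (f' t) t)
    (hu'c : ContinuousOn u' (Icc 0 1)) (hv'c : ContinuousOn v' (Icc 0 1))
    (hf'c : ContinuousOn f' (Icc 0 1))
    (hvne : ∀ t ∈ Icc (0:ℝ) 1, v t ≠ 0)
    (hu0 : u 0 ≠ 0) (huv0 : 0 < u 0 * v 0)
    (q q' g' h' : ℝ → ℝ)
    (hq : ∀ t, q t = u t / v t)
    (hq' : ∀ t, q' t = (u' t * v t - u t * v' t) / (v t) ^ 2)
    (hg' : ∀ t, g' t = (f' t * v t - f t * v' t) / (v t) ^ 2)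
    (hh' : ∀ t, h' t = (f' t * u t - f t * u' t) / (u t) ^ 2)
    (hq'pos : ∀ t ∈ Icc (0:ℝ) 1, 0 < q' t)
    (r r' : ℝ → ℝ) (hrdef : ∀ t, r t = g' t / q' t)
    (hr : ∀ t ∈ Icc (0:ℝ) 1, HasDerivWithinAt r (r' t) (Icc (0:ℝ) 1) t)
    (hr'c : ContinuousOn r' (Icc 0 1))
    (p : ℝ → ℝ) (hp : ∀ t, p t = -(1 / v t) * r' t)
    (c P₀ P₁ : ℝ)
    (hc : c = (∫ t in (0:ℝ)..1, (g' t) ^ 2 / q' t) + f 0 ^ 2 / (u 0 * v 0))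
    (hP₀ : P₀ = -(1 / v 0) * h' 0 * (q' 0)⁻¹ * q 0)
    (hP₁ : P₁ = (1 / u 1) * g' 1 * (q' 1)⁻¹ * q 1) :
    (1 / (1 + c)) * (P₀ * f 0 + P₁ * f 1 + ∫ t in (0:ℝ)..1, p t * f t)
      = c / (1 + c) := by
  have h01 : (0:ℝ) ≤ 1 := by norm_num
  have h0m : (0:ℝ) ∈ Icc (0:ℝ) 1 := by constructor <;> norm_num
  have h1m : (1:ℝ) ∈ Icc (0:ℝ) 1 := by constructor <;> norm_num
  have huIcc : uIcc (0:ℝ) 1 = Icc 0 1 := uIcc_of_le h01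
  have hv0 : v 0 ≠ 0 := hvne 0 h0m
  have hv1 : v 1 ≠ 0 := hvne 1 h1m
  have hus : ContinuousOn u (Icc 0 1) := fun t _ => (hu t).continuousAt.continuousWithinAt
  have hvs : ContinuousOn v (Icc 0 1) := fun t _ => (hv t).continuousAt.continuousWithinAt
  have hfs : ContinuousOn f (Icc 0 1) := fun t _ => (hf t).continuousAt.continuousWithinAt
  have hvsq : ∀ t ∈ Icc (0:ℝ) 1, (v t) ^ 2 ≠ 0 := fun t ht => pow_ne_zero 2 (hvne t ht)
  have hg'c : ContinuousOn g' (Icc 0 1) := by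
    have : ContinuousOn (fun t => (f' t * v t - f t * v' t) / (v t) ^ 2) (Icc 0 1) :=
      ((hf'c.mul hvs).sub (hfs.mul hv'c)).div (hvs.pow 2) hvsq
    exact this.congr fun t _ => hg' t
  have hq'c : ContinuousOn q' (Icc 0 1) := by
    have : ContinuousOn (fun t => (u' t * v t - u t * v' t) / (v t) ^ 2) (Icc 0 1) :=
      ((hu'c.mul hvs).sub (hus.mul hv'c)).div (hvs.pow 2) hvsq
    exact this.congr fun t _ => hq' t
  -- q has derivative q' on Icc
  have hqd : ∀ t ∈ Icc (0:ℝ) 1, HasDerivAt q (q' t) t := by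
    intro t ht
    have hq'' : q = fun s => u s / v s := funext hq
    rw [hq'', hq' t]
    exact (hu t).div (hv t) (hvne t ht)
  -- q 1 > q 0 > 0
  have hq0pos : 0 < q 0 := by
    rw [hq 0]
    rcases mul_pos_iff.mp huv0 with ⟨h1, h2⟩ | ⟨h1, h2⟩
    · exact div_pos h1 h2
    · exact div_pos_of_neg_of_neg h1 h2
  have hftc : ∫ t in (0:ℝ)..1, q' t = q 1 - q 0 := by
    apply intervalIntegral.integral_eq_sub_of_hasDerivAt
    · intro t ht; exact hqd t (huIcc ▸ ht)
    · exact (huIcc ▸ hq'c : ContinuousOn q' (uIcc 0 1)).intervalIntegrable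
  have hq1pos : 0 < q 1 := by
    have hpos : 0 < ∫ t in (0:ℝ)..1, q' t := by
      apply intervalIntegral.intervalIntegral_pos_of_pos_on
      · exact (huIcc ▸ hq'c : ContinuousOn q' (uIcc 0 1)).intervalIntegrable
      · intro x hx; exact hq'pos x ⟨le_of_lt hx.1, le_of_lt hx.2⟩
      · norm_num
    have := hftc ▸ hpos
    linarith
  have hu1 : u 1 ≠ 0 := by
    intro h
    rw [hq 1, h] at hq1pos
    simp at hq1pos
  -- Integration by parts with F = f / v
  set F : ℝ → ℝ := fun t => f t / v t with hFdef
  have hF : ∀ t ∈ uIcc (0:ℝ) 1, HasDerivWithinAt F (g' t) (uIcc (0:ℝ) 1) t := by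
    intro t ht
    rw [huIcc] at ht ⊢
    rw [hg' t]
    exact (((hf t).div (hv t) (hvne t ht))).hasDerivWithinAt
  have hFc : ContinuousOn F (Icc 0 1) := hfs.div hvs hvne
  have hrc : ContinuousOn r (Icc 0 1) := fun t ht => (hr t ht).continuousWithinAt
  have hig' : IntervalIntegrable g' volume 0 1 :=
    (huIcc ▸ hg'c : ContinuousOn g' (uIcc 0 1)).intervalIntegrable
  have hir' : IntervalIntegrable r' volume 0 1 :=
    (huIcc ▸ hr'c : ContinuousOn r' (uIcc 0 1)).intervalIntegrable
  have ibp : ∫ x in (0:ℝ)..1, g' x * r x + F x * r' x = F 1 * r 1 - F 0 * r 0 :=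
    intervalIntegral.integral_deriv_mul_eq_sub_of_hasDerivWithinAt hF
      (fun t ht => huIcc ▸ hr t (huIcc ▸ ht)) hig' hir'
  have hi1 : IntervalIntegrable (fun x => g' x * r x) volume 0 1 :=
    (huIcc ▸ (hg'c.mul hrc) : ContinuousOn (fun x => g' x * r x) (uIcc 0 1)).intervalIntegrable
  have hi2 : IntervalIntegrable (fun x => F x * r' x) volume 0 1 :=
    (huIcc ▸ (hFc.mul hr'c) : ContinuousOn (fun x => F x * r' x) (uIcc 0 1)).intervalIntegrable
  have hsplit : (∫ x in (0:ℝ)..1, g' x * r x) + (∫ x in (0:ℝ)..1, F x * r' x)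
      = F 1 * r 1 - F 0 * r 0 := by
    rw [← intervalIntegral.integral_add hi1 hi2]; exact ibp
  have hI : (∫ x in (0:ℝ)..1, g' x * r x) = ∫ t in (0:ℝ)..1, (g' t) ^ 2 / q' t := by
    apply intervalIntegral.integral_congr
    intro t _
    show g' t * r t = g' t ^ 2 / q' t
    rw [hrdef t]; ring
  have hpf : (∫ t in (0:ℝ)..1, p t * f t) = -∫ x in (0:ℝ)..1, F x * r' x := by
    rw [← intervalIntegral.integral_neg]
    apply intervalIntegral.integral_congr
    intro t _
    show p t * f t = -(F t * r' t)
    rw [hp t]; simp only [hFdef]; ring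
  -- boundary terms
  have hq'0ne : q' 0 ≠ 0 := ne_of_gt (hq'pos 0 h0m)
  have hq'1ne : q' 1 ≠ 0 := ne_of_gt (hq'pos 1 h1m)
  have hb1 : P₁ * f 1 = F 1 * r 1 := by
    rw [hP₁, hrdef 1, hq 1, hFdef]
    field_simp
  have hnum0 : u' 0 * v 0 - u 0 * v' 0 ≠ 0 := by
    intro h
    have := hq' 0
    rw [h] at this
    simp at this
    exact hq'0ne this
  have hb0 : P₀ * f 0 + F 0 * r 0 = f 0 ^ 2 / (u 0 * v 0) := by
    rw [hP₀, hrdef 0, hq 0, hg' 0, hh' 0, hq' 0, hFdef]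
    field_simp
    have hn : v 0 * u' 0 - u 0 * v' 0 ≠ 0 := by rw [mul_comm (v 0)]; exact hnum0
    ring_nf
    rw [← sub_mul, mul_inv_eq_iff_eq_mul₀ hn]
    ring
  -- assemble
  have hsum : P₀ * f 0 + P₁ * f 1 + (∫ t in (0:ℝ)..1, p t * f t) = c := by
    rw [hpf, hc, ← hI]
    have : (∫ x in (0:ℝ)..1, F x * r' x) = F 1 * r 1 - F 0 * r 0
        - ∫ x in (0:ℝ)..1, g' x * r x := by linarith [hsplit]
    rw [this]
    linarith [hb0, hb1]
  rw [hsum]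
  ring
end

section
/- Under the hypotheses of the previous statement, with K(s,t) = u(s)v(t) for s ≤ t and K(s,t) = u(t)v(s) for s > t, the measure ξ* satisfies the reproducing-type identity ∫₀¹ K(s,t) ξ*(ds) = f(t)/(1+c) for every t ∈ [0,1]. -/
open MeasureTheory intervalIntegral Set

/-- Reproducing-type identity for the optimal oracle measure (case (A)): with
`K(s,t) = u(s)v(t)` for `s ≤ t` and `K(s,t) = u(t)v(s)` otherwise, the measure
`ξ*(dt) = (1/(1+c))(P₀δ₀ + P₁δ₁ + p(t)dt)` satisfies
`∫ K(s,t) ξ*(ds) = f(t)/(1+c)` for all `t ∈ [0,1]`. -/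
theorem oracle_measure_reproducing_identity
    (u v f u' v' f' : ℝ → ℝ)
    (hu : ∀ t, HasDerivAt u (u' t) t)
    (hv : ∀ t, HasDerivAt v (v' t) t)
    (hf : ∀ t, HasDerivAt f (f' t) t)
    (hu'c : ContinuousOn u' (Icc 0 1)) (hv'c : ContinuousOn v' (Icc 0 1))
    (hf'c : ContinuousOn f' (Icc 0 1))
    (hvne : ∀ t ∈ Icc (0:ℝ) 1, v t ≠ 0)
    (hu0 : u 0 ≠ 0) (huv0 : 0 < u 0 * v 0)
    (q q' g' h' : ℝ → ℝ)
    (hq : ∀ t, q t = u t / v t)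
    (hq' : ∀ t, q' t = (u' t * v t - u t * v' t) / (v t) ^ 2)
    (hg' : ∀ t, g' t = (f' t * v t - f t * v' t) / (v t) ^ 2)
    (hh' : ∀ t, h' t = (f' t * u t - f t * u' t) / (u t) ^ 2)
    (hq'pos : ∀ t ∈ Icc (0:ℝ) 1, 0 < q' t)
    (r r' : ℝ → ℝ) (hrdef : ∀ t, r t = g' t / q' t)
    (hr : ∀ t ∈ Icc (0:ℝ) 1, HasDerivWithinAt r (r' t) (Icc (0:ℝ) 1) t)
    (hr'c : ContinuousOn r' (Icc 0 1))
    (p : ℝ → ℝ) (hp : ∀ t, p t = -(1 / v t) * r' t)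
    (c P₀ P₁ : ℝ)
    (hc : c = (∫ t in (0:ℝ)..1, (g' t) ^ 2 / q' t) + f 0 ^ 2 / (u 0 * v 0))
    (hP₀ : P₀ = -(1 / v 0) * h' 0 * (q' 0)⁻¹ * q 0)
    (hP₁ : P₁ = (1 / u 1) * g' 1 * (q' 1)⁻¹ * q 1)
    (K : ℝ → ℝ → ℝ)
    (hK : ∀ s t, K s t = if s ≤ t then u s * v t else u t * v s) :
    ∀ t ∈ Icc (0:ℝ) 1,
      (1 / (1 + c)) * (P₀ * K 0 t + P₁ * K 1 t + ∫ s in (0:ℝ)..1, p s * K s t)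
        = f t / (1 + c) := by
  intro t ht
  obtain ⟨ht0, ht1⟩ := ht
  have h01 : (0:ℝ) ∈ Icc (0:ℝ) 1 := by norm_num
  have h11 : (1:ℝ) ∈ Icc (0:ℝ) 1 := by norm_num
  have hvt : v t ≠ 0 := hvne t ⟨ht0, ht1⟩
  have hv0 : v 0 ≠ 0 := hvne 0 h01
  have hv1 : v 1 ≠ 0 := hvne 1 h11
  have hcu : Continuous u := continuous_iff_continuousAt.mpr fun x => (hu x).continuousAt
  have hcv : Continuous v := continuous_iff_continuousAt.mpr fun x => (hv x).continuousAt
  have hcf : Continuous f := continuous_iff_continuousAt.mpr fun x => (hf x).continuousAt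
  have hsub : Icc (0:ℝ) t ⊆ Icc 0 1 := Icc_subset_Icc le_rfl ht1
  have hsub' : Icc t 1 ⊆ Icc (0:ℝ) 1 := Icc_subset_Icc ht0 le_rfl
  have hrc : ContinuousOn r (Icc 0 1) := fun x hx => (hr x hx).continuousWithinAt
  have hq'ne : ∀ x ∈ Icc (0:ℝ) 1, q' x ≠ 0 := fun x hx => (hq'pos x hx).ne'
  have hq'c : ContinuousOn q' (Icc 0 1) := by
    have h : ContinuousOn (fun x => (u' x * v x - u x * v' x) / (v x) ^ 2) (Icc 0 1) :=
      ((hu'c.mul hcv.continuousOn).sub (hcu.continuousOn.mul hv'c)).div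
        (hcv.continuousOn.pow 2) (fun x hx => pow_ne_zero 2 (hvne x hx))
    exact h.congr fun x _ => hq' x
  have hg'c : ContinuousOn g' (Icc 0 1) := by
    have h : ContinuousOn (fun x => (f' x * v x - f x * v' x) / (v x) ^ 2) (Icc 0 1) :=
      ((hf'c.mul hcv.continuousOn).sub (hcf.continuousOn.mul hv'c)).div
        (hcv.continuousOn.pow 2) (fun x hx => pow_ne_zero 2 (hvne x hx))
    exact h.congr fun x _ => hg' x
  have hpc : ContinuousOn p (Icc 0 1) := by
    have h : ContinuousOn (fun x => -(1 / v x) * r' x) (Icc 0 1) :=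
      ((continuousOn_const.div hcv.continuousOn hvne).neg).mul hr'c
    exact h.congr fun x _ => hp x
  have hqfun : q = fun y => u y / v y := funext hq
  have hqd : ∀ x ∈ Icc (0:ℝ) 1, HasDerivAt q (q' x) x := by
    intro x hx
    rw [hqfun, hq' x]
    exact (hu x).div (hv x) (hvne x hx)
  have hqc : ContinuousOn q (Icc 0 1) := by
    rw [hqfun]; exact hcu.continuousOn.div hcv.continuousOn hvne
  have hgd : ∀ x ∈ Icc (0:ℝ) 1, HasDerivAt (fun y => f y / v y) (g' x) x := by
    intro x hx
    rw [hg' x]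
    exact (hf x).div (hv x) (hvne x hx)
  have hgc : ContinuousOn (fun y => f y / v y) (Icc (0:ℝ) 1) :=
    hcf.continuousOn.div hcv.continuousOn hvne
  have hrd : ∀ x ∈ Ioo (0:ℝ) 1, HasDerivAt r (r' x) x := fun x hx =>
    (hr x (Ioo_subset_Icc_self hx)).hasDerivAt (Icc_mem_nhds hx.1 hx.2)
  -- FTC for r on [t,1]
  have hFTCr : ∫ s in t..1, r' s = r 1 - r t := by
    apply integral_eq_sub_of_hasDeriv_right_of_le ht1 (hrc.mono hsub')
    · intro x hx
      exact (hrd x ⟨lt_of_le_of_lt ht0 hx.1, hx.2⟩).hasDerivWithinAt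
    · exact (hr'c.mono hsub').intervalIntegrable_of_Icc ht1
  have hB : ∫ s in t..1, p s * v s = r t - r 1 := by
    have e : ∫ s in t..1, p s * v s = ∫ s in t..1, -r' s := by
      apply integral_congr
      intro s hs
      rw [uIcc_of_le ht1] at hs
      have hsv := hvne s (hsub' hs)
      show p s * v s = -r' s
      rw [hp s]; field_simp
    rw [e, intervalIntegral.integral_neg, hFTCr]; ring
  -- integration by parts ingredients on [0,t]
  have hint_q'r : IntervalIntegrable (fun s => q' s * r s) volume 0 t :=
    ((hq'c.mul hrc).mono hsub).intervalIntegrable_of_Icc ht0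
  have hint_qr' : IntervalIntegrable (fun s => q s * r' s) volume 0 t :=
    ((hqc.mul hr'c).mono hsub).intervalIntegrable_of_Icc ht0
  have hqr : ∫ s in (0:ℝ)..t, (q' s * r s + q s * r' s) = q t * r t - q 0 * r 0 := by
    apply integral_eq_sub_of_hasDeriv_right_of_le ht0 ((hqc.mono hsub).mul (hrc.mono hsub))
    · intro x hx
      have hx1 : x ∈ Ioo (0:ℝ) 1 := ⟨hx.1, lt_of_lt_of_le hx.2 ht1⟩
      exact ((hqd x (Ioo_subset_Icc_self hx1)).mul (hrd x hx1)).hasDerivWithinAt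
    · exact hint_q'r.add hint_qr'
  have hA1 : ∫ s in (0:ℝ)..t, q s * r' s
      = (q t * r t - q 0 * r 0) - ∫ s in (0:ℝ)..t, q' s * r s := by
    rw [← hqr, integral_add hint_q'r hint_qr']; ring
  have hA2 : ∫ s in (0:ℝ)..t, q' s * r s = ∫ s in (0:ℝ)..t, g' s := by
    apply integral_congr
    intro s hs
    rw [uIcc_of_le ht0] at hs
    have hne := hq'ne s (hsub hs)
    show q' s * r s = g' s
    rw [hrdef s]; field_simp
  have hFTCg : ∫ s in (0:ℝ)..t, g' s = f t / v t - f 0 / v 0 := by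
    apply integral_eq_sub_of_hasDeriv_right_of_le ht0 (hgc.mono hsub)
    · intro x hx
      have hx1 : x ∈ Icc (0:ℝ) 1 := hsub (Ioo_subset_Icc_self hx)
      exact (hgd x hx1).hasDerivWithinAt
    · exact (hg'c.mono hsub).intervalIntegrable_of_Icc ht0
  have hA0 : ∫ s in (0:ℝ)..t, p s * u s = ∫ s in (0:ℝ)..t, -(q s * r' s) := by
    apply integral_congr
    intro s hs
    rw [uIcc_of_le ht0] at hs
    have hsv := hvne s (hsub hs)
    show p s * u s = -(q s * r' s)
    rw [hp s, hq s]; ring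
  have hA : ∫ s in (0:ℝ)..t, p s * u s
      = -(q t * r t) + q 0 * r 0 + (f t / v t - f 0 / v 0) := by
    rw [hA0, intervalIntegral.integral_neg, hA1, hA2, hFTCg]; ring
  -- splitting the main integral
  have hi1 : IntervalIntegrable (fun s => p s * K s t) volume 0 t := by
    have hco : ContinuousOn (fun s => p s * K s t) (Icc 0 t) := by
      have h : ContinuousOn (fun s => v t * (p s * u s)) (Icc (0:ℝ) t) :=
        continuousOn_const.mul ((hpc.mono hsub).mul (hcu.continuousOn.mono hsub))
      apply h.congr
      intro s hs
      show p s * K s t = v t * (p s * u s)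
      rw [hK s t, if_pos hs.2]; ring
    exact hco.intervalIntegrable_of_Icc ht0
  have hi2 : IntervalIntegrable (fun s => p s * K s t) volume t 1 := by
    have hco : ContinuousOn (fun s => p s * K s t) (Icc t 1) := by
      have h : ContinuousOn (fun s => u t * (p s * v s)) (Icc t 1) :=
        continuousOn_const.mul ((hpc.mono hsub').mul (hcv.continuousOn.mono hsub'))
      apply h.congr
      intro s hs
      show p s * K s t = u t * (p s * v s)
      rw [hK s t]
      rcases le_or_gt s t with hst | hst
      · have : s = t := le_antisymm hst hs.1
        subst this; rw [if_pos le_rfl]; ring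
      · rw [if_neg (not_le.mpr hst)]; ring
    exact hco.intervalIntegrable_of_Icc ht1
  have hsplit : (∫ s in (0:ℝ)..1, p s * K s t)
      = v t * (∫ s in (0:ℝ)..t, p s * u s) + u t * (∫ s in t..1, p s * v s) := by
    have e1 : ∫ s in (0:ℝ)..t, p s * K s t = ∫ s in (0:ℝ)..t, v t * (p s * u s) := by
      apply integral_congr
      intro s hs
      rw [uIcc_of_le ht0] at hs
      show p s * K s t = v t * (p s * u s)
      rw [hK s t, if_pos hs.2]; ring
    have e2 : ∫ s in t..1, p s * K s t = ∫ s in t..1, u t * (p s * v s) := by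
      apply integral_congr
      intro s hs
      rw [uIcc_of_le ht1] at hs
      show p s * K s t = u t * (p s * v s)
      rw [hK s t]
      rcases le_or_gt s t with hst | hst
      · have : s = t := le_antisymm hst hs.1
        subst this; rw [if_pos le_rfl]; ring
      · rw [if_neg (not_le.mpr hst)]; ring
    rw [← integral_add_adjacent_intervals hi1 hi2, e1, e2, intervalIntegral.integral_const_mul,
      intervalIntegral.integral_const_mul]
  -- endpoint algebra
  have hD0 : u' 0 * v 0 - u 0 * v' 0 ≠ 0 := by
    intro h
    have hpos := hq'pos 0 h01
    rw [hq' 0, h] at hpos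
    simp at hpos
  have hP0' : P₀ * u 0 = f 0 / v 0 - q 0 * r 0 := by
    rw [hP₀, hrdef 0, hh' 0, hg' 0, hq' 0, hq 0]
    have hD0' : v 0 * u' 0 - u 0 * v' 0 ≠ 0 := by rw [mul_comm (v 0)]; exact hD0
    field_simp
    ring
  -- u 1 ≠ 0 via strict monotonicity of q
  have hmono : StrictMonoOn q (Icc 0 1) := by
    apply strictMonoOn_of_deriv_pos (convex_Icc 0 1) hqc
    intro x hx
    rw [interior_Icc] at hx
    rw [(hqd x (Ioo_subset_Icc_self hx)).deriv]
    exact hq'pos x (Ioo_subset_Icc_self hx)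
  have hq0pos : 0 < q 0 := by
    rw [hq 0]
    rcases mul_pos_iff.mp huv0 with ⟨h1, h2⟩ | ⟨h1, h2⟩
    · exact div_pos h1 h2
    · exact div_pos_of_neg_of_neg h1 h2
  have hq1pos : 0 < q 1 := hq0pos.trans (hmono h01 h11 one_pos)
  have hu1 : u 1 ≠ 0 := by
    intro h
    rw [hq 1, h] at hq1pos
    simp at hq1pos
  have hP1' : P₁ * v 1 = r 1 := by
    rw [hP₁, hq 1, hrdef 1]
    field_simp [hq'ne 1 h11]
  -- final assembly
  have hK0 : K 0 t = u 0 * v t := by rw [hK, if_pos ht0]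
  have hK1 : K 1 t = u t * v 1 := by
    rw [hK]
    rcases le_or_gt 1 t with h | h
    · have : t = 1 := le_antisymm ht1 h
      rw [if_pos h, this]
    · rw [if_neg (not_le.mpr h)]
  have h1 : v t * (f t / v t) = f t := by field_simp
  have h2 : v t * q t = u t := by rw [hq t]; field_simp
  have key : P₀ * K 0 t + P₁ * K 1 t + (∫ s in (0:ℝ)..1, p s * K s t) = f t := by
    rw [hK0, hK1, hsplit, hA, hB]
    linear_combination v t * hP0' + u t * hP1' + h1 - r t * h2
  rw [key]
  ring
end
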